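/- Let (V, r, parent) be an arborescence with edge weights c, w : V → ℝ such that c v > 0 and w v > 0 for all v ≠ r, satisfying both the combined triangle inequality and the combined 2-optimality condition. Fix k > 0 and ρ ≥ 0, and let E_ρ = {v ∈ V | v ≠ r, ρ < c(v) ≤ (k/4) · ρ, and k · c(u) ≤ c(v) for every child u of v}. Then for every v ∈ E_ρ: Σ_{u ∈ Desc(v)} w(u) ≥ (1/2) · Σ_{u ∈ Desc(v) ∩ E_ρ} c(u). -/
import Mathlib

/-- `(r, parent)` is an arborescence on `V`: the root is a fixed point of
`parent`, and every vertex reaches the root by iterating `parent`. -/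
def IsArborescence {V : Type} (r : V) (parent : V → V) : Prop :=
  parent r = r ∧ ∀ v : V, ∃ n : ℕ, parent^[n] v = r

open Classical in
/-- The children of a vertex `y`. -/
noncomputable def children {V : Type} [Fintype V] (parent : V → V) (y : V) : Finset V :=
  Finset.univ.filter fun u => parent u = y ∧ u ≠ y

open Classical in
/-- The descendants of a vertex `v` (including `v` itself): the vertex set of the
sub-arborescence below the edge entering `v`. -/
noncomputable def desc {V : Type} [Fintype V] (parent : V → V) (v : V) : Finset V :=
  Finset.univ.filter fun u => ∃ n : ℕ, parent^[n] u = v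

open Classical in
/-- The non-root vertices, corresponding to the edges of the arborescence. -/
noncomputable def nonRoot {V : Type} [Fintype V] (r : V) : Finset V :=
  Finset.univ.filter fun v => v ≠ r

/-- The combined triangle inequality. -/
def CombinedTriangle {V : Type} [Fintype V] (r : V) (parent : V → V) (c w : V → ℝ) : Prop :=
  ∀ v : V, v ≠ r → c v ≤ w v + ∑ u ∈ children parent v, c u

open Classical in
/-- The combined 2-optimality condition. -/
noncomputable def CombinedTwoOpt {V : Type} [Fintype V] (r : V) (parent : V → V) (c w : V → ℝ) : Prop :=
  ∀ v : V, v ≠ r → ∀ z ∈ children parent v,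
    c v + c z ≤ w v + ∑ u ∈ (children parent v).erase z, c u

section Aux

variable {V : Type} [Fintype V] {r : V} {parent : V → V}

lemma mem_desc' {p x : V} : x ∈ desc parent p ↔ ∃ n : ℕ, parent^[n] x = p := by
  classical
  simp [desc]

lemma mem_children' {p u : V} : u ∈ children parent p ↔ parent u = p ∧ u ≠ p := by
  classical
  simp [children]

lemma self_mem_desc (p : V) : p ∈ desc parent p := mem_desc'.mpr ⟨0, rfl⟩

lemma no_cycle (harb : IsArborescence r parent) {p : V} (hp : p ≠ r) :
    ∀ n : ℕ, parent^[n + 1] p = p → False := by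
  intro n h
  obtain ⟨m, hm⟩ := harb.2 p
  have hiter : ∀ j : ℕ, parent^[j * (n + 1)] p = p := by
    intro j
    induction j with
    | zero => simp
    | succ j ih =>
      have he : (j + 1) * (n + 1) = n + 1 + j * (n + 1) := by ring
      rw [he, Function.iterate_add_apply, ih, h]
  have hge : m ≤ m * (n + 1) := Nat.le_mul_of_pos_right m (Nat.succ_pos n)
  have hr : parent^[m * (n + 1)] p = r := by
    have h2 : parent^[(m * (n + 1) - m) + m] p = r := by
      rw [Function.iterate_add_apply, hm, Function.iterate_fixed harb.1]
    rwa [Nat.sub_add_cancel hge] at h2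
  exact hp (by rw [← hiter m, hr])

lemma child_ne_root (harb : IsArborescence r parent) {p u : V} (hp : p ≠ r)
    (hu : u ∈ children parent p) : u ≠ r := by
  obtain ⟨h1, _⟩ := mem_children'.mp hu
  rintro rfl
  exact hp (by rw [← h1, harb.1])

lemma desc_child_subset {p u : V} (hu : u ∈ children parent p) :
    desc parent u ⊆ desc parent p := by
  intro x hx
  obtain ⟨n, hn⟩ := mem_desc'.mp hx
  exact mem_desc'.mpr ⟨n + 1, by rw [Function.iterate_succ_apply', hn, (mem_children'.mp hu).1]⟩

lemma root_not_mem_desc_child (harb : IsArborescence r parent) {p u : V} (hp : p ≠ r)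
    (hu : u ∈ children parent p) : p ∉ desc parent u := by
  intro h
  obtain ⟨n, hn⟩ := mem_desc'.mp h
  exact no_cycle harb hp n (by rw [Function.iterate_succ_apply', hn, (mem_children'.mp hu).1])

lemma card_desc_child_lt (harb : IsArborescence r parent) {p u : V} (hp : p ≠ r)
    (hu : u ∈ children parent p) : (desc parent u).card < (desc parent p).card :=
  Finset.card_lt_card <| (Finset.ssubset_iff_of_subset (desc_child_subset hu)).mpr
    ⟨p, self_mem_desc p, root_not_mem_desc_child harb hp hu⟩

lemma desc_children_pairwiseDisjoint (harb : IsArborescence r parent) {p : V} (hp : p ≠ r) :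
    (↑(children parent p) : Set V).PairwiseDisjoint (desc parent) := by
  have key : ∀ u₁ ∈ children parent p, ∀ u₂ ∈ children parent p, ∀ x : V, ∀ a b : ℕ,
      a ≤ b → parent^[a] x = u₁ → parent^[b] x = u₂ → u₁ = u₂ := by
    intro u₁ h₁ u₂ h₂ x a b hab ha hb
    have hb' : parent^[(b - a) + a] x = u₂ := by rwa [Nat.sub_add_cancel hab]
    rw [Function.iterate_add_apply, ha] at hb'
    rcases Nat.eq_zero_or_pos (b - a) with hd | hd
    · rw [hd] at hb'; simpa using hb'
    · exfalso
      obtain ⟨e, he⟩ : ∃ e, b - a = e + 1 := ⟨b - a - 1, by omega⟩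
      rw [he, Function.iterate_succ_apply, (mem_children'.mp h₁).1] at hb'
      apply no_cycle harb hp e
      rw [Function.iterate_succ_apply', hb', (mem_children'.mp h₂).1]
  intro u₁ h₁ u₂ h₂ hne
  rw [Function.onFun, Finset.disjoint_left]
  replace h₁ := Finset.mem_coe.mp h₁
  replace h₂ := Finset.mem_coe.mp h₂
  intro x hx1 hx2
  obtain ⟨a, ha⟩ := mem_desc'.mp hx1
  obtain ⟨b, hb⟩ := mem_desc'.mp hx2
  rcases le_total a b with hab | hab
  · exact hne (key u₁ h₁ u₂ h₂ x a b hab ha hb)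
  · exact hne (key u₂ h₂ u₁ h₁ x b a hab hb ha).symm

open Classical in
lemma desc_decomp (harb : IsArborescence r parent) {p : V} (hp : p ≠ r) :
    desc parent p = insert p ((children parent p).biUnion (desc parent)) := by
  classical
  ext x
  simp only [Finset.mem_insert, Finset.mem_biUnion]
  constructor
  · intro hx
    obtain ⟨n, hn⟩ := mem_desc'.mp hx
    by_cases hxp : x = p
    · exact Or.inl hxp
    · right
      have hex : ∃ n : ℕ, parent^[n] x = p := ⟨n, hn⟩
      have hn0 : parent^[Nat.find hex] x = p := Nat.find_spec hex
      have hpos : 0 < Nat.find hex := by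
        rcases Nat.eq_zero_or_pos (Nat.find hex) with h0 | h0
        · exact absurd (by simpa [h0] using hn0) hxp
        · exact h0
      set m := Nat.find hex - 1 with hm
      have hm1 : m + 1 = Nat.find hex := by omega
      refine ⟨parent^[m] x, mem_children'.mpr ⟨?_, ?_⟩, mem_desc'.mpr ⟨m, rfl⟩⟩
      · have hstep := Function.iterate_succ_apply' parent m x
        rw [← hstep, Nat.succ_eq_add_one, hm1]
        exact hn0
      · intro hmp
        exact Nat.find_min hex (by omega) hmp
  · rintro (rfl | ⟨u, hu, hx⟩)
    · exact self_mem_desc x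
    · exact desc_child_subset hu hx

open Classical in
lemma sum_desc (harb : IsArborescence r parent) {p : V} (hp : p ≠ r) (h : V → ℝ) :
    ∑ x ∈ desc parent p, h x = h p + ∑ u ∈ children parent p, ∑ x ∈ desc parent u, h x := by
  classical
  rw [desc_decomp harb hp, Finset.sum_insert, Finset.sum_biUnion (desc_children_pairwiseDisjoint harb hp)]
  simp only [Finset.mem_biUnion, not_exists]
  intro u hu
  exact root_not_mem_desc_child harb hp hu.1 hu.2

lemma mem_desc_ne_root (harb : IsArborescence r parent) {p x : V} (hp : p ≠ r)
    (hx : x ∈ desc parent p) : x ≠ r := by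
  rintro rfl
  obtain ⟨n, hn⟩ := mem_desc'.mp hx
  rw [Function.iterate_fixed harb.1] at hn
  exact hp hn.symm

end Aux

open Classical in
lemma main_invariant {V : Type} [Fintype V]
    (r : V) (parent : V → V) (c w : V → ℝ)
    (harb : IsArborescence r parent)
    (hc : ∀ v : V, v ≠ r → 0 < c v) (hw : ∀ v : V, v ≠ r → 0 < w v)
    (htri : CombinedTriangle r parent c w)
    (k ρ : ℝ) (hk : 0 < k) (hρ : 0 ≤ ρ)
    (S : Finset V)
    (hS : ∀ v : V, v ∈ S ↔ v ≠ r ∧ ρ < c v ∧ c v ≤ (k / 4) * ρ ∧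
      ∀ u ∈ children parent v, k * c u ≤ c v) :
    ∀ (N : ℕ) (p : V), p ≠ r → (desc parent p).card ≤ N →
      (1 / 2) * (∑ u ∈ desc parent p, (if u ∈ S then c u else 0)) +
        (if p ∈ S then c p / 6 else (2 / 3) * min (c p) (ρ / 4)) ≤
        ∑ u ∈ desc parent p, w u := by
  intro N
  induction N with
  | zero =>
    intro p hp hcard
    have : 0 < (desc parent p).card := Finset.card_pos.mpr ⟨p, self_mem_desc p⟩
    omega
  | succ N ih =>
    intro p hp hcard
    set g : V → ℝ := fun u => if u ∈ S then c u / 6 else (2 / 3) * min (c u) (ρ / 4) with hg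
    have hch_ne : ∀ u ∈ children parent p, u ≠ r := fun u hu => child_ne_root harb hp hu
    have hgnn : ∀ u ∈ children parent p, 0 ≤ g u := by
      intro u hu
      have hcu : 0 < c u := hc u (hch_ne u hu)
      by_cases h : u ∈ S <;> simp only [hg, h, if_true, if_false]
      · linarith
      · have : (0:ℝ) ≤ min (c u) (ρ / 4) := le_min (by linarith) (by linarith)
        linarith
    have hIH : ∀ u ∈ children parent p,
        (1 / 2) * (∑ x ∈ desc parent u, (if x ∈ S then c x else 0)) + g u ≤
          ∑ x ∈ desc parent u, w x := by
      intro u hu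
      have := card_desc_child_lt harb hp hu
      exact ih u (hch_ne u hu) (by omega)
    have hsum : ∑ u ∈ children parent p,
        ((1 / 2) * (∑ x ∈ desc parent u, (if x ∈ S then c x else 0)) + g u) ≤
        ∑ u ∈ children parent p, ∑ x ∈ desc parent u, w x :=
      Finset.sum_le_sum hIH
    rw [Finset.sum_add_distrib, ← Finset.mul_sum] at hsum
    rw [sum_desc harb hp w, sum_desc harb hp (fun u => if u ∈ S then c u else 0)]
    -- it suffices to show the local inequality
    have hCnn : 0 ≤ ∑ u ∈ children parent p, c u :=
      Finset.sum_nonneg fun u hu => le_of_lt (hc u (hch_ne u hu))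
    have htri' := htri p hp
    have hwp := hw p hp
    have main : (1 / 2) * (if p ∈ S then c p else 0) +
        (if p ∈ S then c p / 6 else (2 / 3) * min (c p) (ρ / 4)) ≤
        w p + ∑ u ∈ children parent p, g u := by
      by_cases hpS : p ∈ S
      · -- p in S : all children are outside S with c u ≤ ρ/4
        obtain ⟨-, hρc, hck, hkc⟩ := (hS p).mp hpS
        have hρpos : 0 < ρ := by
          rcases hρ.lt_or_eq with h | h
          · exact h
          · exfalso
            rw [← h] at hρc hck
            have hcp : 0 < c p := by linarith
            nlinarith
        have hchild : ∀ u ∈ children parent p, g u = (2 / 3) * c u := by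
          intro u hu
          have h1 : k * c u ≤ k * (ρ / 4) := by
            calc k * c u ≤ c p := hkc u hu
            _ ≤ k * (ρ / 4) := by nlinarith
          have h2 : c u ≤ ρ / 4 := le_of_mul_le_mul_left h1 hk
          have hnotS : u ∉ S := by
            intro huS
            have := ((hS u).mp huS).2.1
            linarith
          simp only [hg, hnotS, if_false, min_eq_left h2]
        rw [Finset.sum_congr rfl hchild, ← Finset.mul_sum]
        simp only [hpS, if_true]
        rcases le_total (∑ u ∈ children parent p, c u) (c p) with hC | hC
        · linarith
        · linarith
      · -- p not in S
        simp only [hpS, if_false]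
        by_cases hex : ∃ u ∈ children parent p, (2 / 3) * min (c p) (ρ / 4) ≤ g u
        · obtain ⟨u, hu, hgu⟩ := hex
          have hle : g u ≤ ∑ x ∈ children parent p, g x := Finset.single_le_sum hgnn hu
          linarith
        · push_neg at hex
          have hm1 : min (c p) (ρ / 4) ≤ c p := min_le_left _ _
          have hm2 : min (c p) (ρ / 4) ≤ ρ / 4 := min_le_right _ _
          have hchild : ∀ u ∈ children parent p, g u = (2 / 3) * c u := by
            intro u hu
            have hlt := hex u hu
            have hnotS : u ∉ S := by
              intro huS
              have hcu := ((hS u).mp huS).2.1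
              have : g u = c u / 6 := by simp [hg, huS]
              rw [this] at hlt
              linarith
            have h2 : c u ≤ ρ / 4 := by
              by_contra h2
              push_neg at h2
              have : g u = (2 / 3) * (ρ / 4) := by
                simp [hg, hnotS, min_eq_right (le_of_lt h2)]
              rw [this] at hlt
              linarith
            simp only [hg, hnotS, if_false, min_eq_left h2]
          rw [Finset.sum_congr rfl hchild, ← Finset.mul_sum]
          rcases le_total (min (c p) (ρ / 4)) (∑ u ∈ children parent p, c u) with hC | hC
          · linarith
          · linarith
    linarith [hsum]

open Classical in
theorem subtree_w_ge_half_c_Er {V : Type} [Fintype V]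
    (r : V) (parent : V → V) (c w : V → ℝ)
    (harb : IsArborescence r parent)
    (hc : ∀ v : V, v ≠ r → 0 < c v) (hw : ∀ v : V, v ≠ r → 0 < w v)
    (htri : CombinedTriangle r parent c w)
    (h2opt : CombinedTwoOpt r parent c w)
    (k ρ : ℝ) (hk : 0 < k) (hρ : 0 ≤ ρ) :
    ∀ v ∈ (nonRoot r).filter
        (fun v => ρ < c v ∧ c v ≤ (k / 4) * ρ ∧ ∀ u ∈ children parent v, k * c u ≤ c v),
      (1 / 2) * ∑ u ∈ (desc parent v) ∩ ((nonRoot r).filter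
          (fun v => ρ < c v ∧ c v ≤ (k / 4) * ρ ∧ ∀ u ∈ children parent v, k * c u ≤ c v)), c u ≤
        ∑ u ∈ desc parent v, w u := by
  intro v hv
  set S := (nonRoot r).filter
      (fun v => ρ < c v ∧ c v ≤ (k / 4) * ρ ∧ ∀ u ∈ children parent v, k * c u ≤ c v) with hSdef
  have hS : ∀ x : V, x ∈ S ↔ x ≠ r ∧ ρ < c x ∧ c x ≤ (k / 4) * ρ ∧
      ∀ u ∈ children parent x, k * c u ≤ c x := by
    intro x
    simp [hSdef, nonRoot, Finset.mem_filter, and_assoc]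
  have hvr : v ≠ r := ((hS v).mp hv).1
  have hinv := main_invariant r parent c w harb hc hw htri k ρ hk hρ S hS
    (desc parent v).card v hvr le_rfl
  have heq : ∑ u ∈ (desc parent v) ∩ S, c u =
      ∑ u ∈ desc parent v, (if u ∈ S then c u else 0) := by
    rw [← Finset.filter_mem_eq_inter, Finset.sum_filter]
  rw [heq]
  have hgv : (0:ℝ) ≤ (if v ∈ S then c v / 6 else (2 / 3) * min (c v) (ρ / 4)) := by
    simp only [hv, if_true]
    linarith [hc v hvr]
  linarith
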